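/- arXiv:2006.05248 — 4 statements merged into one kernel-verified Lean document; each statement's English description precedes it below -/
import Mathlib

section
/- Let μ be a doubling measure on a metric space X with doubling constant C_d, and let V ≥ 0 be locally integrable such that the measure V dμ is doubling with constant C_V, i.e. ∫_{B(x,2r)} V dμ ≤ C_V ∫_{B(x,r)} V dμ. Fix x ∈ X and ρ > 0 satisfying (ρ²/μ(B(x,ρ))) ∫_{B(x,ρ)} V dμ ≤ C₀. Then for every r ≥ ρ, (r²/μ(B(x,r))) ∫_{B(x,r)} V dμ ≤ 4 C_V C₀ (r/ρ)^{k₁} with k₁ = 2 + log₂ C_V. -/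
/-!
Iterating the doubling of `V dμ` gives `∫_{B(x, 2ⁿρ)} V ≤ C_Vⁿ ∫_{B(x, ρ)} V`. Taking `n` with
`r ≤ 2ⁿρ ≤ 2r` and writing `C_V = 2 ^ log₂ C_V` gives `C_Vⁿ ≤ C_V (r/ρ)^{log₂ C_V}`. Since
`μ(B(x, ρ)) ≤ μ(B(x, r))`, the averages of `V` over the two balls satisfy the same bound, and
`r² = (r/ρ)² ρ²` contributes the remaining factor `(r/ρ)²`.
-/

open MeasureTheory Metric

theorem pow_le_mul_rpow_logb_of_two_pow_le {C t : ℝ} (hC : 1 ≤ C) (ht : 0 ≤ t) {n : ℕ}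
    (hn : (2 : ℝ) ^ n ≤ 2 * t) : C ^ n ≤ C * t ^ Real.logb 2 C := by
  have hC2 : (2 : ℝ) ^ Real.logb 2 C = C := Real.rpow_logb two_pos (by norm_num) (by linarith)
  calc C ^ n = ((2 : ℝ) ^ n) ^ Real.logb 2 C := by rw [← Real.rpow_pow_comm two_pos.le, hC2]
    _ ≤ (2 * t) ^ Real.logb 2 C :=
      Real.rpow_le_rpow (by positivity) hn (Real.logb_nonneg one_lt_two hC)
    _ = C * t ^ Real.logb 2 C := by rw [Real.mul_rpow two_pos.le ht, hC2]

theorem le_pow_mul_of_doubling {f : ℝ → ℝ} {C s : ℝ} (hC : 0 ≤ C)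
    (hf : ∀ r, 0 < r → f (2 * r) ≤ C * f r) (hs : 0 < s) (n : ℕ) :
    f (2 ^ n * s) ≤ C ^ n * f s := by
  induction n with
  | zero => simp
  | succ n ih =>
    calc f (2 ^ (n + 1) * s) = f (2 * (2 ^ n * s)) := by ring_nf
      _ ≤ C * f (2 ^ n * s) := hf _ (by positivity)
      _ ≤ C * (C ^ n * f s) := mul_le_mul_of_nonneg_left ih hC
      _ = C ^ (n + 1) * f s := by ring

theorem le_mul_rpow_logb_mul_of_doubling {f : ℝ → ℝ} {C ρ r : ℝ} (hC : 1 ≤ C)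
    (hmono : MonotoneOn f (Set.Ioi 0)) (hf : ∀ s, 0 < s → f (2 * s) ≤ C * f s)
    (hfρ : 0 ≤ f ρ) (hρ : 0 < ρ) (hρr : ρ ≤ r) :
    f r ≤ C * (r / ρ) ^ Real.logb 2 C * f ρ := by
  obtain ⟨n, hn_le, hlt⟩ := exists_nat_pow_near ((one_le_div hρ).mpr hρr) one_lt_two
  have hr : r ≤ 2 ^ (n + 1) * ρ := by
    rw [div_lt_iff₀ hρ] at hlt
    exact hlt.le
  calc f r ≤ f (2 ^ (n + 1) * ρ) := hmono (hρ.trans_le hρr) (Set.mem_Ioi.mpr (by positivity)) hr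
    _ ≤ C ^ (n + 1) * f ρ := le_pow_mul_of_doubling (by linarith) hf hρ _
    _ ≤ C * (r / ρ) ^ Real.logb 2 C * f ρ := by
      refine mul_le_mul_of_nonneg_right
        (pow_le_mul_rpow_logb_of_two_pow_le hC (div_nonneg (hρ.le.trans hρr) hρ.le) ?_) hfρ
      rw [pow_succ]
      linarith

theorem setIntegral_div_measureReal_le_of_subset {α : Type*} [MeasurableSpace α]
    {μ : Measure α} {f : α → ℝ} {s t : Set α} {K : ℝ} (hf : ∀ y, 0 ≤ f y) (hK : 0 ≤ K)
    (hst : s ⊆ t) (hint : ∫ y in t, f y ∂μ ≤ K * ∫ y in s, f y ∂μ) :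
    (∫ y in t, f y ∂μ) / μ.real t ≤ K * ((∫ y in s, f y ∂μ) / μ.real s) := by
  have hIs : 0 ≤ ∫ y in s, f y ∂μ := integral_nonneg hf
  rcases (measureReal_nonneg (μ := μ) (s := t)).eq_or_lt with ht | ht
  · rw [← ht, div_zero]
    positivity
  have hμt : μ t ≠ ⊤ := fun h => ht.ne' (by simp [Measure.real, h])
  rcases (measureReal_nonneg (μ := μ) (s := s)).eq_or_lt with hs | hs
  · have hμs : μ s = 0 :=
      ((measureReal_eq_zero_iff (measure_ne_top_of_subset hst hμt)).mp hs.symm)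
    rw [Measure.restrict_eq_zero.mpr hμs, integral_zero_measure, mul_zero] at hint
    rw [Measure.restrict_eq_zero.mpr hμs, integral_zero_measure, zero_div, mul_zero]
    exact div_nonpos_of_nonpos_of_nonneg hint ht.le
  calc (∫ y in t, f y ∂μ) / μ.real t ≤ (∫ y in t, f y ∂μ) / μ.real s :=
        div_le_div_of_nonneg_left (integral_nonneg hf) hs (measureReal_mono hst hμt)
    _ ≤ K * (∫ y in s, f y ∂μ) / μ.real s := by gcongr
    _ = K * ((∫ y in s, f y ∂μ) / μ.real s) := mul_div_assoc _ _ _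

theorem stmt1_general {X : Type*} [MetricSpace X] [MeasurableSpace X] (μ : Measure X)
    (V : X → ℝ) (hV : ∀ x, 0 ≤ V x) (hVloc : ∀ x : X, ∀ r : ℝ, 0 < r →
      IntegrableOn V (ball x r) μ)
    (C_V C₀ : ℝ) (hCV : 1 ≤ C_V)
    (hVdoub : ∀ x : X, ∀ r : ℝ, 0 < r →
      ∫ y in ball x (2 * r), V y ∂μ ≤ C_V * ∫ y in ball x r, V y ∂μ)
    (x : X) (ρ : ℝ) (hρ : 0 < ρ)
    (hmass : ρ ^ 2 / (μ (ball x ρ)).toReal * ∫ y in ball x ρ, V y ∂μ ≤ C₀) :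
    ∀ r : ℝ, ρ ≤ r →
      r ^ 2 / (μ (ball x r)).toReal * ∫ y in ball x r, V y ∂μ ≤
        4 * C_V * C₀ * (r / ρ) ^ (2 + Real.logb 2 C_V) := by
  intro r hr
  have hr0 : 0 < r := hρ.trans_le hr
  have hCV0 : 0 < C_V := one_pos.trans_le hCV
  have hmono : MonotoneOn (fun s => ∫ y in ball x s, V y ∂μ) (Set.Ioi 0) :=
    fun a _ b hb hab => setIntegral_mono_set (hVloc x b hb) (ae_of_all _ fun y => hV y)
      (ae_of_all _ (ball_subset_ball hab))
  have hgrowth := le_mul_rpow_logb_mul_of_doubling hCV hmono (hVdoub x) (integral_nonneg hV) hρ hr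
  have havg := setIntegral_div_measureReal_le_of_subset hV (by positivity) (ball_subset_ball hr)
    hgrowth
  have hC₀ : 0 ≤ C₀ := le_trans (mul_nonneg (by positivity) (integral_nonneg hV)) hmass
  calc r ^ 2 / (μ (ball x r)).toReal * ∫ y in ball x r, V y ∂μ
      = (r / ρ) ^ 2 * ρ ^ 2 * ((∫ y in ball x r, V y ∂μ) / μ.real (ball x r)) := by
        rw [measureReal_def]
        field_simp
    _ ≤ (r / ρ) ^ 2 * ρ ^ 2 *
          (C_V * (r / ρ) ^ Real.logb 2 C_V * ((∫ y in ball x ρ, V y ∂μ) / μ.real (ball x ρ))) :=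
        mul_le_mul_of_nonneg_left havg (by positivity)
    _ = C_V * (r / ρ) ^ (2 + Real.logb 2 C_V) *
          (ρ ^ 2 / (μ (ball x ρ)).toReal * ∫ y in ball x ρ, V y ∂μ) := by
        rw [Real.rpow_add (by positivity), Real.rpow_two, measureReal_def]
        ring
    _ ≤ C_V * (r / ρ) ^ (2 + Real.logb 2 C_V) * C₀ := by gcongr
    _ ≤ 4 * C_V * C₀ * (r / ρ) ^ (2 + Real.logb 2 C_V) := by
        have : 0 ≤ C_V * C₀ * (r / ρ) ^ (2 + Real.logb 2 C_V) := by positivity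
        linarith

theorem stmt1 {X : Type*} [MetricSpace X] [MeasurableSpace X] (μ : Measure X)
    (C_d : ℝ) (hCd : 0 < C_d)
    (hdoub : ∀ x : X, ∀ r : ℝ, 0 < r →
      (μ (ball x (2 * r))).toReal ≤ C_d * (μ (ball x r)).toReal)
    (V : X → ℝ) (hV : ∀ x, 0 ≤ V x) (hVloc : ∀ x : X, ∀ r : ℝ, 0 < r →
      IntegrableOn V (ball x r) μ)
    (C_V C₀ : ℝ) (hCV : 1 ≤ C_V) (hC₀ : 0 ≤ C₀)
    (hVdoub : ∀ x : X, ∀ r : ℝ, 0 < r →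
      ∫ y in ball x (2 * r), V y ∂μ ≤ C_V * ∫ y in ball x r, V y ∂μ)
    (x : X) (ρ : ℝ) (hρ : 0 < ρ)
    (hmass : ρ ^ 2 / (μ (ball x ρ)).toReal * ∫ y in ball x ρ, V y ∂μ ≤ C₀) :
    ∀ r : ℝ, ρ ≤ r →
      r ^ 2 / (μ (ball x r)).toReal * ∫ y in ball x r, V y ∂μ ≤
        4 * C_V * C₀ * (r / ρ) ^ (2 + Real.logb 2 C_V) :=
  stmt1_general μ V hV hVloc C_V C₀ hCV hVdoub x ρ hρ hmass
end

section
/- For any measurable set B of finite measure and positive measurable function V on B, and any λ > 0: μ({x ∈ B : V(x) < λ}) ≤ (1/log(1 + 1/λ)) ∫_B log(1 + 1/V(x)) dμ(x). Moreover, log(1 + 1/V) ≤ log(1+V) + log(1/V)·1_{V<1} ≤ V + log(1/V)·1_{V<1}, so if additionally ∫_B log(1/V) dμ ≤ 0, then μ({x ∈ B : V(x) < λ}) ≤ (1/log(1 + 1/λ)) ∫_B V dμ. -/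
/-! Since `t ↦ log (1 + t⁻¹)` is decreasing, `V < λ` forces `log (1 + V⁻¹) > log (1 + λ⁻¹)`, and
Chebyshev's inequality gives the first bound. For the second, `log (1 + v⁻¹) = log (1 + v) + log v⁻¹
≤ v + log v⁻¹`, so integrating and using `∫ log V⁻¹ ≤ 0` replaces the integrand by `V`. -/

open MeasureTheory

theorem measureReal_le_inv_mul_setIntegral {α : Type*} [MeasurableSpace α] {μ : Measure α}
    {f : α → ℝ} {s t : Set α} {c : ℝ} (hc : 0 < c) (hf_nonneg : 0 ≤ᵐ[μ.restrict t] f)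
    (hf : IntegrableOn f t μ) (hst : s ⊆ t) (hcf : ∀ x ∈ s, c ≤ f x) :
    μ.real s ≤ c⁻¹ * ∫ x in t, f x ∂μ := by
  have hsub : s ⊆ {x | c ≤ f x} ∩ t := fun x hx => ⟨hcf x hx, hst hx⟩
  have hfin : μ.restrict t {x | c ≤ f x} < ⊤ := hf.measure_ge_lt_top hc
  rw [le_inv_mul_iff₀ hc]
  calc c * μ.real s ≤ c * (μ.restrict t).real {x | c ≤ f x} := by
        gcongr
        exact ENNReal.toReal_mono hfin.ne ((measure_mono hsub).trans (Measure.le_restrict_apply _ _))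
    _ ≤ ∫ x in t, f x ∂μ := mul_meas_ge_le_integral_of_nonneg hf_nonneg hf c

theorem Real.log_one_add_inv_le_add_log_inv {x : ℝ} (hx : 0 < x) :
    Real.log (1 + x⁻¹) ≤ x + Real.log x⁻¹ := by
  have hsplit : 1 + x⁻¹ = (1 + x) * x⁻¹ := by field_simp; ring
  rw [hsplit, Real.log_mul (by positivity) (by positivity)]
  linarith [Real.log_le_sub_one_of_pos (show 0 < 1 + x by positivity)]

theorem stmt6_general {α : Type*} [MeasurableSpace α] (μ : Measure α)
    (B : Set α)
    (V : α → ℝ) (hV : ∀ x, 0 < V x)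
    (hint1 : IntegrableOn (fun x => Real.log (1 + (V x)⁻¹)) B μ)
    (hint2 : IntegrableOn V B μ)
    (hint3 : IntegrableOn (fun x => Real.log (V x)⁻¹) B μ)
    (lam : ℝ) (hlam : 0 < lam) :
    (μ {x ∈ B | V x < lam}).toReal ≤
        (Real.log (1 + lam⁻¹))⁻¹ * ∫ x in B, Real.log (1 + (V x)⁻¹) ∂μ ∧
    ((∫ x in B, Real.log (V x)⁻¹ ∂μ) ≤ 0 →
      (μ {x ∈ B | V x < lam}).toReal ≤ (Real.log (1 + lam⁻¹))⁻¹ * ∫ x in B, V x ∂μ) := by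
  have hc : 0 < Real.log (1 + lam⁻¹) := Real.log_pos (by simpa using hlam)
  have hchebyshev : μ.real {x ∈ B | V x < lam} ≤
      (Real.log (1 + lam⁻¹))⁻¹ * ∫ x in B, Real.log (1 + (V x)⁻¹) ∂μ :=
    measureReal_le_inv_mul_setIntegral hc
      (Filter.Eventually.of_forall fun x => Real.log_nonneg (by simpa using (hV x).le)) hint1
      (fun x hx => hx.1) fun x hx => by
        have : lam⁻¹ ≤ (V x)⁻¹ := inv_anti₀ (hV x) hx.2.le
        gcongr
  have hlog_integral_le : ∫ x in B, Real.log (V x)⁻¹ ∂μ ≤ 0 →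
      ∫ x in B, Real.log (1 + (V x)⁻¹) ∂μ ≤ ∫ x in B, V x ∂μ := fun hlog =>
    calc ∫ x in B, Real.log (1 + (V x)⁻¹) ∂μ ≤ ∫ x in B, (V x + Real.log (V x)⁻¹) ∂μ :=
          integral_mono hint1 (hint2.add hint3) fun x => Real.log_one_add_inv_le_add_log_inv (hV x)
      _ = (∫ x in B, V x ∂μ) + ∫ x in B, Real.log (V x)⁻¹ ∂μ := integral_add hint2 hint3
      _ ≤ ∫ x in B, V x ∂μ := by linarith
  exact ⟨hchebyshev, fun hlog => hchebyshev.trans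
    (mul_le_mul_of_nonneg_left (hlog_integral_le hlog) (inv_nonneg.mpr hc.le))⟩

theorem stmt6 {α : Type*} [MeasurableSpace α] (μ : Measure α)
    (B : Set α) (hB : MeasurableSet B) (hBfin : μ B < ⊤)
    (V : α → ℝ) (hV : ∀ x, 0 < V x) (hVmeas : Measurable V)
    (hint1 : IntegrableOn (fun x => Real.log (1 + (V x)⁻¹)) B μ)
    (hint2 : IntegrableOn V B μ)
    (hint3 : IntegrableOn (fun x => Real.log (V x)⁻¹) B μ)
    (lam : ℝ) (hlam : 0 < lam) :
    (μ {x ∈ B | V x < lam}).toReal ≤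
        (Real.log (1 + lam⁻¹))⁻¹ * ∫ x in B, Real.log (1 + (V x)⁻¹) ∂μ ∧
    ((∫ x in B, Real.log (V x)⁻¹ ∂μ) ≤ 0 →
      (μ {x ∈ B | V x < lam}).toReal ≤ (Real.log (1 + lam⁻¹))⁻¹ * ∫ x in B, V x ∂μ) :=
  stmt6_general μ B V hV hint1 hint2 hint3 lam hlam
end

section
/- Let k₀ ≥ 1 and suppose ρ : X → (0,∞) satisfies the lower bound ρ(y) ≥ C⁻¹ ρ(x)(1 + d(x,y)/ρ(x))^{-k₀} for all x, y ∈ X. Then for every x₀ ∈ X, r > 0 and x ∈ B(x₀, 4r), 1 + r/ρ(x) ≥ c (1 + r/ρ(x₀))^{1/(k₀+1)} for some c > 0 depending only on C and k₀. -/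
theorem stmt8 {X : Type*} [MetricSpace X]
    (ρ : X → ℝ) (hρ : ∀ x, 0 < ρ x)
    (C k₀ : ℝ) (hC : 1 ≤ C) (hk₀ : 1 ≤ k₀)
    (hlow : ∀ x y : X, C⁻¹ * ρ x * (1 + dist x y / ρ x) ^ (-k₀) ≤ ρ y) :
    ∃ c > (0:ℝ), ∀ x₀ : X, ∀ r : ℝ, 0 < r → ∀ x ∈ Metric.ball x₀ (4 * r),
      c * (1 + r / ρ x₀) ^ (1 / (k₀ + 1)) ≤ 1 + r / ρ x := by
  have h4pos : (0:ℝ) < 4 ^ k₀ := Real.rpow_pos_of_pos (by norm_num) _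
  have h41 : (1:ℝ) ≤ 4 ^ k₀ := Real.one_le_rpow (by norm_num) (by linarith)
  set K : ℝ := C * 4 ^ k₀ with hK
  have hKpos : 0 < K := by positivity
  have hK1 : (1:ℝ) ≤ K := by nlinarith
  refine ⟨K⁻¹, by positivity, ?_⟩
  intro x₀ r hr x hx
  have hρx := hρ x
  have hρ0 := hρ x₀
  have hd4 : dist x x₀ < 4 * r := by simpa [Metric.mem_ball] using hx
  have hdnn : (0:ℝ) ≤ dist x x₀ := dist_nonneg
  set d := dist x x₀ with hd
  set t : ℝ := 1 + r / ρ x with ht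
  set A : ℝ := 1 + r / ρ x₀ with hA
  have ht1 : (1:ℝ) ≤ t := by
    rw [ht]
    have : 0 < r / ρ x := by positivity
    linarith
  have htpos : (0:ℝ) < t := by linarith
  have hA1 : (1:ℝ) ≤ A := by
    rw [hA]
    have : 0 < r / ρ x₀ := by positivity
    linarith
  have hb : (0:ℝ) < 1 + d / ρ x := by positivity
  have hpow : 0 < (1 + d / ρ x) ^ k₀ := Real.rpow_pos_of_pos hb _
  have h1 := hlow x x₀
  rw [Real.rpow_neg hb.le] at h1
  have h2 : ρ x ≤ C * ρ x₀ * (1 + d / ρ x) ^ k₀ := by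
    calc ρ x = (C⁻¹ * ρ x * ((1 + d / ρ x) ^ k₀)⁻¹) * (C * (1 + d / ρ x) ^ k₀) := by
          field_simp
      _ ≤ ρ x₀ * (C * (1 + d / ρ x) ^ k₀) :=
          mul_le_mul_of_nonneg_right h1 (by positivity)
      _ = C * ρ x₀ * (1 + d / ρ x) ^ k₀ := by ring
  have h3 : 1 + d / ρ x ≤ 4 * t := by
    have h31 : d / ρ x ≤ 4 * r / ρ x := by gcongr
    have : 4 * r / ρ x = 4 * (r / ρ x) := by ring
    rw [this] at h31
    have : 0 ≤ r / ρ x := by positivity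
    rw [ht]; linarith
  have h4 : (1 + d / ρ x) ^ k₀ ≤ (4 * t) ^ k₀ :=
    Real.rpow_le_rpow hb.le h3 (by linarith)
  have htk : (0:ℝ) < t ^ k₀ := Real.rpow_pos_of_pos htpos _
  have h5 : ρ x ≤ C * ρ x₀ * (4 ^ k₀ * t ^ k₀) := by
    rw [← Real.mul_rpow (by norm_num) htpos.le]
    exact h2.trans (mul_le_mul_of_nonneg_left h4 (by positivity))
  -- lower bound for r / ρ x
  have hM : 0 < C * ρ x₀ * (4 ^ k₀ * t ^ k₀) := by positivity
  have h6 : r / (C * ρ x₀ * (4 ^ k₀ * t ^ k₀)) ≤ r / ρ x :=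
    div_le_div_of_nonneg_left hr.le hρx h5
  have h7 : 1 + r / (C * ρ x₀ * (4 ^ k₀ * t ^ k₀)) ≤ t := by
    rw [ht]; linarith
  -- key inequality: t ^ (k₀ + 1) ≥ A / K
  have h8 : t ^ k₀ * (1 + r / (C * ρ x₀ * (4 ^ k₀ * t ^ k₀))) =
      t ^ k₀ + r / (ρ x₀ * K) := by
    field_simp
    ring
  have htk1 : (1:ℝ) ≤ t ^ k₀ := Real.one_le_rpow ht1 (by linarith)
  have h9 : A / K ≤ t ^ (k₀ + 1) := by
    have e1 : t ^ (k₀ + 1) = t ^ k₀ * t := by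
      rw [Real.rpow_add htpos, Real.rpow_one]
    have e2 : t ^ k₀ * t ≥ t ^ k₀ + r / (ρ x₀ * K) := by
      calc t ^ k₀ * t ≥ t ^ k₀ * (1 + r / (C * ρ x₀ * (4 ^ k₀ * t ^ k₀))) := by
            exact mul_le_mul_of_nonneg_left h7 htk.le
        _ = t ^ k₀ + r / (ρ x₀ * K) := h8
    have e3 : A / K ≤ 1 + r / (ρ x₀ * K) := by
      rw [div_le_iff₀ hKpos]
      have : (1 + r / (ρ x₀ * K)) * K = K + r / ρ x₀ := by
        field_simp
      rw [this, hA]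
      linarith
    calc A / K ≤ 1 + r / (ρ x₀ * K) := e3
      _ ≤ t ^ k₀ + r / (ρ x₀ * K) := by linarith
      _ ≤ t ^ k₀ * t := e2
      _ = t ^ (k₀ + 1) := e1.symm
  have hAK : 0 < A / K := by positivity
  have h10 : (A / K) ^ (1 / (k₀ + 1)) ≤ t := by
    have := Real.rpow_le_rpow hAK.le h9 (by positivity : (0:ℝ) ≤ 1 / (k₀ + 1))
    rwa [← Real.rpow_mul htpos.le,
      mul_one_div, div_self (by positivity : k₀ + 1 ≠ 0), Real.rpow_one] at this
  have h11 : (A / K) ^ (1 / (k₀ + 1)) = A ^ (1 / (k₀ + 1)) * K ^ (-(1 / (k₀ + 1))) := by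
    rw [Real.div_rpow (by linarith) hKpos.le, Real.rpow_neg hKpos.le, div_eq_mul_inv]
  have h12 : K⁻¹ ≤ K ^ (-(1 / (k₀ + 1))) := by
    rw [← Real.rpow_neg_one K]
    apply Real.rpow_le_rpow_of_exponent_le hK1
    have h : 0 < k₀ + 1 := by linarith
    rw [neg_le_neg_iff, div_le_one h]
    linarith
  calc K⁻¹ * A ^ (1 / (k₀ + 1)) ≤ K ^ (-(1 / (k₀ + 1))) * A ^ (1 / (k₀ + 1)) := by
        apply mul_le_mul_of_nonneg_right h12 (by positivity)
    _ = (A / K) ^ (1 / (k₀ + 1)) := by rw [h11]; ring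
    _ ≤ t := h10
end

section
/- Let δ ∈ (0,1), N > δ, and ρ > 0. Define F(s) = (t/√s)·exp(-t²/(4s))·(√s/ρ)^δ·(1 + √s/ρ)^{-N} for s, t > 0. Then there is C = C(δ, N) such that ∫_0^∞ F(s) ds/s ≤ C (t/ρ)^δ (1 + t/ρ)^{-N} for all t > 0. -/
/-!
Writing `φ(a) = a^δ (1 + a)^{-N}`, the ratio `(1 + a)/(1 + b)` lies between `1` and `a/b`, so
`φ(a) ≤ φ(b) ((a/b)^δ + (a/b)^{δ-N})`. With `a = √s/ρ`, `b = t/ρ` this bounds the integrand by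
`φ(t/ρ)` times the sum of `subordinationKernel t s * (√s/t)^α` over `α = δ` and `α = δ - N`. Since
`ds/s` is invariant under `s ↦ t²/(4s)`, each of these integrals is the Gamma integral
`4^{(1-α)/2} Γ((1-α)/2)`, finite and independent of `t` as `α < 1`.
-/

open Real MeasureTheory Set

section InvariantMeasure

variable {E : Type*} [NormedAddCommGroup E] [NormedSpace ℝ E] {c : ℝ}

private lemma inv_smul_comp_const_div_eq_rpow (g : ℝ → E) {s : ℝ} (hs : 0 < s) :
    s⁻¹ • g (c / s) = s ^ ((-1:ℝ) - 1) • (s ^ (-1:ℝ))⁻¹ • g (c * s ^ (-1:ℝ)) := by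
  rw [smul_smul, rpow_neg_one, inv_inv, div_eq_mul_inv, rpow_sub_one hs.ne', rpow_neg_one]
  field_simp

theorem integral_Ioi_inv_smul_comp_const_div (g : ℝ → E) (hc : 0 < c) :
    ∫ s in Ioi 0, s⁻¹ • g (c / s) = ∫ x in Ioi 0, x⁻¹ • g x := by
  have hinv := integral_comp_rpow_Ioi (fun y : ℝ => y⁻¹ • g (c * y)) (p := -1) (by norm_num)
  have hscale := integral_comp_mul_left_Ioi (fun x : ℝ => x⁻¹ • g x) 0 hc
  simp only [abs_neg, abs_one, one_mul] at hinv
  rw [mul_zero] at hscale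
  calc ∫ s in Ioi 0, s⁻¹ • g (c / s)
      = ∫ y in Ioi 0, y⁻¹ • g (c * y) := by
        rw [← hinv]
        exact setIntegral_congr_fun measurableSet_Ioi fun s hs =>
          inv_smul_comp_const_div_eq_rpow g hs
    _ = c • ∫ y in Ioi 0, (c * y)⁻¹ • g (c * y) := by
        rw [← integral_smul]
        refine setIntegral_congr_fun measurableSet_Ioi fun y _ => ?_
        simp only [smul_smul, mul_inv, ← mul_assoc, mul_inv_cancel₀ hc.ne', one_mul]
    _ = ∫ x in Ioi 0, x⁻¹ • g x := by
        rw [hscale, smul_smul, mul_inv_cancel₀ hc.ne', one_smul]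

theorem integrableOn_Ioi_inv_smul_comp_const_div_iff (g : ℝ → E) (hc : 0 < c) :
    IntegrableOn (fun s => s⁻¹ • g (c / s)) (Ioi 0) ↔
      IntegrableOn (fun x => x⁻¹ • g x) (Ioi 0) := by
  calc IntegrableOn (fun s => s⁻¹ • g (c / s)) (Ioi 0)
      ↔ IntegrableOn (fun y => y⁻¹ • g (c * y)) (Ioi 0) := by
        rw [← integrableOn_Ioi_comp_rpow_iff' (fun y => y⁻¹ • g (c * y)) (p := -1) (by norm_num)]
        exact integrableOn_congr_fun (fun s hs => inv_smul_comp_const_div_eq_rpow g hs)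
          measurableSet_Ioi
    _ ↔ IntegrableOn (fun y => c • ((c * y)⁻¹ • g (c * y))) (Ioi 0) volume := by
        refine integrableOn_congr_fun (fun y _ => ?_) measurableSet_Ioi
        simp only [smul_smul, mul_inv, ← mul_assoc, mul_inv_cancel₀ hc.ne', one_mul]
    _ ↔ IntegrableOn (fun y => (c * y)⁻¹ • g (c * y)) (Ioi 0) volume :=
        integrable_smul_iff (μ := volume.restrict (Ioi 0)) hc.ne' _
    _ ↔ IntegrableOn (fun x => x⁻¹ • g x) (Ioi 0) := by
        rw [integrableOn_Ioi_comp_mul_left_iff (fun x => x⁻¹ • g x) 0 hc, mul_zero]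

end InvariantMeasure

/-- `e^{-t√L} = (2√π)⁻¹ ∫₀^∞ subordinationKernel t s • e^{-sL} ds`. -/
noncomputable def subordinationKernel (t s : ℝ) : ℝ := t / √s * exp (-t ^ 2 / (4 * s)) / s

lemma subordinationKernel_mul_rpow (α : ℝ) {t s : ℝ} (ht : 0 < t) (hs : 0 < s) :
    subordinationKernel t s * (√s / t) ^ α =
      s⁻¹ * ((4 * (t ^ 2 / 4 / s)) ^ ((1 - α) / 2) * exp (-(t ^ 2 / 4 / s))) := by
  have hq : 0 < √s / t := by positivity
  have hpow : t / √s * (√s / t) ^ α = (4 * (t ^ 2 / 4 / s)) ^ ((1 - α) / 2) := calc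
    t / √s * (√s / t) ^ α = ((√s / t) ^ 2)⁻¹ ^ ((1 - α) / 2) := by
      rw [inv_rpow (by positivity), ← rpow_natCast, ← rpow_mul hq.le, ← rpow_neg hq.le,
        ← inv_div, ← rpow_neg_one, ← rpow_add hq]
      norm_num
      ring_nf
    _ = (4 * (t ^ 2 / 4 / s)) ^ ((1 - α) / 2) := by
      rw [div_pow, sq_sqrt hs.le]
      field_simp
  rw [subordinationKernel, ← hpow, neg_div, div_div]
  ring

lemma inv_mul_four_mul_rpow_mul_exp {β x : ℝ} (hx : 0 < x) :
    x⁻¹ * ((4 * x) ^ β * exp (-x)) = 4 ^ β * (exp (-x) * x ^ (β - 1)) := by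
  rw [mul_rpow (by norm_num) hx.le, rpow_sub_one hx.ne']
  field_simp

lemma integrableOn_subordinationKernel_mul_rpow {α t : ℝ} (hα : α < 1) (ht : 0 < t) :
    IntegrableOn (fun s => subordinationKernel t s * (√s / t) ^ α) (Ioi 0) := by
  have hβ : 0 < (1 - α) / 2 := by linarith
  have hgamma : IntegrableOn (fun x : ℝ => x⁻¹ * ((4 * x) ^ ((1 - α) / 2) * exp (-x))) (Ioi 0) :=
    IntegrableOn.congr_fun ((GammaIntegral_convergent hβ).const_mul _)
      (fun x hx => (inv_mul_four_mul_rpow_mul_exp hx).symm) measurableSet_Ioi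
  exact ((integrableOn_Ioi_inv_smul_comp_const_div_iff _ (by positivity)).mpr hgamma).congr_fun
    (fun s hs => (subordinationKernel_mul_rpow α ht hs).symm) measurableSet_Ioi

lemma integral_subordinationKernel_mul_rpow {α t : ℝ} (hα : α < 1) (ht : 0 < t) :
    ∫ s in Ioi 0, subordinationKernel t s * (√s / t) ^ α =
      4 ^ ((1 - α) / 2) * Gamma ((1 - α) / 2) := by
  calc ∫ s in Ioi 0, subordinationKernel t s * (√s / t) ^ α
      = ∫ s in Ioi 0, s⁻¹ * ((4 * (t ^ 2 / 4 / s)) ^ ((1 - α) / 2) * exp (-(t ^ 2 / 4 / s))) :=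
        setIntegral_congr_fun measurableSet_Ioi fun s hs => subordinationKernel_mul_rpow α ht hs
    _ = ∫ x in Ioi 0, x⁻¹ * ((4 * x) ^ ((1 - α) / 2) * exp (-x)) :=
        integral_Ioi_inv_smul_comp_const_div (fun x => (4 * x) ^ ((1 - α) / 2) * exp (-x))
          (by positivity)
    _ = 4 ^ ((1 - α) / 2) * Gamma ((1 - α) / 2) := by
        rw [Gamma_eq_integral (by linarith), ← integral_const_mul]
        exact setIntegral_congr_fun measurableSet_Ioi fun x hx => inv_mul_four_mul_rpow_mul_exp hx

lemma one_add_div_one_add_rpow_le (p : ℝ) {a b : ℝ} (ha : 0 < a) (hb : 0 < b) :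
    ((1 + a) / (1 + b)) ^ p ≤ 1 + (a / b) ^ p := by
  have hr : 0 < (1 + a) / (1 + b) := by positivity
  have hq : 0 < a / b := by positivity
  rcases le_total a b with hab | hba
  · have hr1 : (1 + a) / (1 + b) ≤ 1 := (div_le_one (by positivity)).mpr (by linarith)
    have hqr : a / b ≤ (1 + a) / (1 + b) := by
      rw [div_le_div_iff₀ hb (by positivity)]; linarith
    rcases le_total 0 p with hp | hp
    · linarith [rpow_le_one hr.le hr1 hp, rpow_nonneg hq.le p]
    · linarith [rpow_le_rpow_of_nonpos hq hqr hp]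
  · have hr1 : 1 ≤ (1 + a) / (1 + b) := (one_le_div (by positivity)).mpr (by linarith)
    have hrq : (1 + a) / (1 + b) ≤ a / b := by
      rw [div_le_div_iff₀ (by positivity) hb]; linarith
    rcases le_total 0 p with hp | hp
    · linarith [rpow_le_rpow hr.le hrq hp]
    · linarith [rpow_le_one_of_one_le_of_nonpos hr1 hp, rpow_nonneg hq.le p]

lemma rpow_mul_one_add_rpow_neg_le (δ N : ℝ) {a b : ℝ} (ha : 0 < a) (hb : 0 < b) :
    a ^ δ * (1 + a) ^ (-N) ≤ b ^ δ * (1 + b) ^ (-N) * ((a / b) ^ δ + (a / b) ^ (δ - N)) := by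
  have hfactor : a ^ δ * (1 + a) ^ (-N) =
      b ^ δ * (1 + b) ^ (-N) * ((a / b) ^ δ * ((1 + a) / (1 + b)) ^ (-N)) := by
    rw [div_rpow ha.le hb.le, div_rpow (by positivity) (by positivity)]
    field_simp
  rw [hfactor, sub_eq_add_neg, rpow_add (by positivity), ← mul_one_add]
  gcongr
  exact one_add_div_one_add_rpow_le _ ha hb

lemma subordinationKernel_mul_rpow_mul_one_add_rpow_neg_le (δ N : ℝ) {ρ t s : ℝ} (hρ : 0 < ρ)
    (ht : 0 < t) (hs : 0 < s) :
    subordinationKernel t s * ((√s / ρ) ^ δ * (1 + √s / ρ) ^ (-N)) ≤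
      (t / ρ) ^ δ * (1 + t / ρ) ^ (-N) *
        (subordinationKernel t s * (√s / t) ^ δ + subordinationKernel t s * (√s / t) ^ (δ - N)) := by
  have hratio := rpow_mul_one_add_rpow_neg_le δ N (a := √s / ρ) (b := t / ρ)
    (by positivity) (by positivity)
  rw [div_div_div_cancel_right₀ hρ.ne'] at hratio
  have hkernel : 0 ≤ subordinationKernel t s := by rw [subordinationKernel]; positivity
  calc subordinationKernel t s * ((√s / ρ) ^ δ * (1 + √s / ρ) ^ (-N))
      ≤ subordinationKernel t s *
          ((t / ρ) ^ δ * (1 + t / ρ) ^ (-N) * ((√s / t) ^ δ + (√s / t) ^ (δ - N))) := by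
        gcongr
    _ = _ := by ring

theorem stmt10_general (δ N : ℝ) (hδ1 : δ < 1) (hN : δ < N) :
    ∃ C > (0:ℝ), ∀ ρ t : ℝ, 0 < ρ → 0 < t →
      (∫ s in Set.Ioi (0:ℝ),
        (t / Real.sqrt s) * Real.exp (-t^2 / (4*s)) * (Real.sqrt s / ρ) ^ δ *
          (1 + Real.sqrt s / ρ) ^ (-N) / s) ≤
        C * (t / ρ) ^ δ * (1 + t / ρ) ^ (-N) := by
  have hδN : δ - N < 1 := by linarith
  refine ⟨4 ^ ((1 - δ) / 2) * Gamma ((1 - δ) / 2) +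
      4 ^ ((1 - (δ - N)) / 2) * Gamma ((1 - (δ - N)) / 2), by positivity, fun ρ t hρ ht => ?_⟩
  have hint {α : ℝ} (hα : α < 1) := integrableOn_subordinationKernel_mul_rpow hα ht
  have hintegrand (s : ℝ) :
      t / √s * exp (-t ^ 2 / (4 * s)) * (√s / ρ) ^ δ * (1 + √s / ρ) ^ (-N) / s =
        subordinationKernel t s * ((√s / ρ) ^ δ * (1 + √s / ρ) ^ (-N)) := by
    rw [subordinationKernel]; ring
  simp only [hintegrand]
  calc _ ≤ ∫ s in Ioi 0, (t / ρ) ^ δ * (1 + t / ρ) ^ (-N) *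
        (subordinationKernel t s * (√s / t) ^ δ + subordinationKernel t s * (√s / t) ^ (δ - N)) :=
        setIntegral_mono_of_nonneg
          (fun s (hs : 0 < s) => by rw [subordinationKernel]; positivity)
          (fun s hs => subordinationKernel_mul_rpow_mul_one_add_rpow_neg_le δ N hρ ht hs)
          (((hint hδ1).add (hint hδN)).const_mul _)
    _ = _ := by
      rw [integral_const_mul, integral_add (hint hδ1) (hint hδN),
        integral_subordinationKernel_mul_rpow hδ1 ht, integral_subordinationKernel_mul_rpow hδN ht]
      ring

theorem stmt10 (δ N : ℝ) (hδ0 : 0 < δ) (hδ1 : δ < 1) (hN : δ < N) :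
    ∃ C > (0:ℝ), ∀ ρ t : ℝ, 0 < ρ → 0 < t →
      (∫ s in Set.Ioi (0:ℝ),
        (t / Real.sqrt s) * Real.exp (-t^2 / (4*s)) * (Real.sqrt s / ρ) ^ δ *
          (1 + Real.sqrt s / ρ) ^ (-N) / s) ≤
        C * (t / ρ) ^ δ * (1 + t / ρ) ^ (-N) :=
  stmt10_general δ N hδ1 hN
end
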